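/- arXiv:2007.07989 — 2 statements merged into one kernel-verified Lean document; each statement's English description precedes it below -/
import Mathlib

section
/- Suppose the multistage momentum weights satisfy 1/2 ≤ β_1 ≤ β_2 ≤ … ≤ β_n < 1 and β_i^{2 T_i} ≤ 1/2 for every stage i = 1, …, n. Then for every 1 ≤ k ≤ T_1 + … + T_n: (1/(1−β_1)) E[‖m^k − ∑_{i=1}^k b_{k,i} g^i‖²] ≤ 2σ². -/
/-!
Write `D k = m^k - ∑ i ≤ k, b_{k,i} g^i`. The weights satisfy `b_{k+1,i} = β(k+1) b_{k,i}` for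
`i ≤ k` and `b_{k+1,k+1} = 1 - β(k+1)`, so `D (k+1) = β D k + (1 - β) (g̃^{k+1} - g^{k+1})` with
`β = β(k+1)`. Both `D k` and `x^{k+1}` are functions of `ζ^1, …, ζ^k`, hence independent of
`ζ^{k+1}`; freezing them, the fresh noise has mean zero and variance at most `σ²`, so the cross
term vanishes and `E‖D (k+1)‖² ≤ β² E‖D k‖² + (1 - β)² σ²`. On the whole horizon
`β₁ ≤ β < 1`, and then `(1 - β)² ≤ (1 - β₁)(1 - β²)` shows that `E‖D k‖² ≤ (1 - β₁) σ²` is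
preserved.
-/

open MeasureTheory ProbabilityTheory Finset
open scoped ENNReal RealInnerProductSpace

section SecondMoment

variable {α E : Type*} {mα : MeasurableSpace α} {μ : Measure α} [NormedAddCommGroup E]

theorem integral_sub_eq_zero_of_integral_eq [NormedSpace ℝ E] [CompleteSpace E]
    [IsProbabilityMeasure μ] {f : α → E} {c : E} (h : ∫ a, f a ∂μ = c) :
    ∫ a, (f a - c) ∂μ = 0 := by
  by_cases hf : Integrable f μ
  · rw [integral_sub hf (integrable_const c), integral_const, h]
    simp
  -- junk value: a non-integrable `f` forces `c = 0`
  · rw [← h, integral_undef hf]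
    simp only [sub_zero]
    exact integral_undef hf

theorem integral_norm_add_sq_of_integral_eq_zero [InnerProductSpace ℝ E] [CompleteSpace E]
    [IsProbabilityMeasure μ] (c : E) {e : α → E} (he : MemLp e 2 μ) (he0 : ∫ a, e a ∂μ = 0) :
    ∫ a, ‖c + e a‖ ^ 2 ∂μ = ‖c‖ ^ 2 + ∫ a, ‖e a‖ ^ 2 ∂μ := by
  have hint : Integrable e μ := he.integrable one_le_two
  have hcross : Integrable (fun a => 2 * ⟪c, e a⟫) μ := (hint.const_inner c).const_mul 2
  have hsq : Integrable (fun a => ‖e a‖ ^ 2) μ := (memLp_two_iff_integrable_sq_norm he.1).1 he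
  simp_rw [norm_add_sq_real]
  rw [integral_add (f := fun a => ‖c‖ ^ 2 + 2 * ⟪c, e a⟫) ((integrable_const _).add hcross) hsq,
    integral_add (integrable_const _) hcross, integral_const_mul, integral_inner hint, he0,
    inner_zero_right]
  simp

theorem lintegral_ofReal_norm_sq_ne_top_iff {f : α → E} (hf : AEStronglyMeasurable f μ) :
    ∫⁻ a, ENNReal.ofReal (‖f a‖ ^ 2) ∂μ ≠ ⊤ ↔ MemLp f 2 μ := by
  rw [memLp_two_iff_integrable_sq_norm hf, Integrable,
    hasFiniteIntegral_iff_ofReal (ae_of_all _ fun _ => sq_nonneg _), lt_top_iff_ne_top]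
  exact ⟨fun h => ⟨hf.norm.pow 2, h⟩, And.right⟩

theorem lintegral_ofReal_norm_sq_eq_ofReal_integral {f : α → E} (hf : MemLp f 2 μ) :
    ∫⁻ a, ENNReal.ofReal (‖f a‖ ^ 2) ∂μ = ENNReal.ofReal (∫ a, ‖f a‖ ^ 2 ∂μ) :=
  (ofReal_integral_eq_lintegral_ofReal ((memLp_two_iff_integrable_sq_norm hf.1).1 hf)
    (ae_of_all _ fun _ => sq_nonneg _)).symm

theorem integral_norm_sq_eq_toReal_lintegral {f : α → E} (hf : AEStronglyMeasurable f μ) :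
    ∫ a, ‖f a‖ ^ 2 ∂μ = (∫⁻ a, ENNReal.ofReal (‖f a‖ ^ 2) ∂μ).toReal :=
  integral_eq_lintegral_of_nonneg_ae (ae_of_all _ fun _ => sq_nonneg _) (hf.norm.pow 2)

theorem lintegral_ofReal_norm_smul_add_smul_sq_of_ne_top [InnerProductSpace ℝ E]
    [CompleteSpace E] [IsProbabilityMeasure μ] {e : α → E} (he : AEStronglyMeasurable e μ)
    (he0 : ∫ a, e a ∂μ = 0) {β : ℝ} (hβ : β ≠ 1) (c : E)
    (h : ∫⁻ a, ENNReal.ofReal (‖β • c + (1 - β) • e a‖ ^ 2) ∂μ ≠ ⊤) :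
    ∫⁻ a, ENNReal.ofReal (‖β • c + (1 - β) • e a‖ ^ 2) ∂μ
      = ENNReal.ofReal (β ^ 2 * ‖c‖ ^ 2 + (1 - β) ^ 2 * ∫ a, ‖e a‖ ^ 2 ∂μ) := by
  have hF : MemLp (fun a => β • c + (1 - β) • e a) 2 μ :=
    (lintegral_ofReal_norm_sq_ne_top_iff (aestronglyMeasurable_const.add (he.const_smul _))).1 h
  have he2 : MemLp e 2 μ := by
    have h1β : 1 - β ≠ 0 := sub_ne_zero.2 hβ.symm
    convert (hF.sub (memLp_const (β • c))).const_smul (1 - β)⁻¹ using 1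
    ext a
    simp [smul_smul, inv_mul_cancel₀ h1β]
  rw [lintegral_ofReal_norm_sq_eq_ofReal_integral hF,
    integral_norm_add_sq_of_integral_eq_zero _ (e := fun a => (1 - β) • e a)
      (he2.const_smul (1 - β)) (by rw [integral_smul, he0, smul_zero])]
  simp only [norm_smul, mul_pow, Real.norm_eq_abs, sq_abs, integral_const_mul]

theorem lintegral_ofReal_norm_smul_add_smul_sq_bounds [InnerProductSpace ℝ E] [CompleteSpace E]
    [IsProbabilityMeasure μ] {e : α → E} (he : AEStronglyMeasurable e μ) (he0 : ∫ a, e a ∂μ = 0)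
    {s : ℝ} (hs : ∫ a, ‖e a‖ ^ 2 ∂μ ≤ s) {β : ℝ} (hβ : β ≠ 1) (c : E) :
    ENNReal.ofReal (β ^ 2) * ENNReal.ofReal (‖c‖ ^ 2)
        ≤ ∫⁻ a, ENNReal.ofReal (‖β • c + (1 - β) • e a‖ ^ 2) ∂μ ∧
      (∫⁻ a, ENNReal.ofReal (‖β • c + (1 - β) • e a‖ ^ 2) ∂μ ≠ ⊤ →
        ∫⁻ a, ENNReal.ofReal (‖β • c + (1 - β) • e a‖ ^ 2) ∂μ
          ≤ ENNReal.ofReal (β ^ 2) * ENNReal.ofReal (‖c‖ ^ 2)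
            + ENNReal.ofReal ((1 - β) ^ 2 * s)) := by
  have hexact := lintegral_ofReal_norm_smul_add_smul_sq_of_ne_top he he0 hβ c
  rw [← ENNReal.ofReal_mul (sq_nonneg β)]
  refine ⟨?_, fun hfin => ?_⟩
  · by_cases hfin : ∫⁻ a, ENNReal.ofReal (‖β • c + (1 - β) • e a‖ ^ 2) ∂μ = ⊤
    · exact hfin ▸ le_top
    · rw [hexact hfin]
      exact ENNReal.ofReal_le_ofReal (le_add_of_nonneg_right (by positivity))
  · rw [hexact hfin]
    refine (ENNReal.ofReal_le_ofReal ?_).trans ENNReal.ofReal_add_le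
    gcongr

end SecondMoment

theorem ProbabilityTheory.IndepFun.lintegral_comp_eq_lintegral_lintegral {Ω α β : Type*}
    {mΩ : MeasurableSpace Ω} [MeasurableSpace α] [MeasurableSpace β] {P : Measure Ω}
    [IsProbabilityMeasure P] {U : Ω → α} {V : Ω → β} (hUV : IndepFun U V P)
    (hU : Measurable U) (hV : Measurable V) {h : α → β → ℝ≥0∞}
    (hh : Measurable (Function.uncurry h)) :
    ∫⁻ ω, h (U ω) (V ω) ∂P = ∫⁻ u, ∫⁻ v, h u v ∂(P.map V) ∂(P.map U) := by
  calc ∫⁻ ω, h (U ω) (V ω) ∂P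
      = ∫⁻ p, Function.uncurry h p ∂(P.map fun ω => (U ω, V ω)) :=
        (lintegral_map hh (hU.prodMk hV)).symm
    _ = ∫⁻ p, Function.uncurry h p ∂((P.map U).prod (P.map V)) := by
        rw [(indepFun_iff_map_prod_eq_prod_map_map hU.aemeasurable hV.aemeasurable).1 hUV]
    _ = _ := lintegral_prod _ hh.aemeasurable

section NoiseHistory

variable {Ω Z : Type*} {mΩ : MeasurableSpace Ω} [mZ : MeasurableSpace Z]

@[reducible] def noiseHistory (ζ : ℕ → Ω → Z) (k : ℕ) : MeasurableSpace Ω :=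
  ⨆ i ∈ Set.Iic k, mZ.comap (ζ i)

theorem measurable_noiseHistory {ζ : ℕ → Ω → Z} {i k : ℕ} (hik : i ≤ k) :
    Measurable[noiseHistory ζ k] (ζ i) :=
  Measurable.of_comap_le (le_iSup₂ (f := fun j (_ : j ∈ Set.Iic k) => mZ.comap (ζ j)) i hik)

theorem noiseHistory_mono (ζ : ℕ → Ω → Z) : Monotone (noiseHistory ζ) :=
  fun _ _ hkl => biSup_mono fun _ hi => Set.mem_Iic.2 ((Set.mem_Iic.1 hi).trans hkl)

theorem noiseHistory_le {ζ : ℕ → Ω → Z} (hζ : ∀ k, Measurable (ζ k)) (k : ℕ) :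
    noiseHistory ζ k ≤ mΩ :=
  iSup₂_le fun i _ => (hζ i).comap_le

theorem ProbabilityTheory.iIndepFun.indepFun_succ_of_measurable_noiseHistory {β : Type*}
    [MeasurableSpace β] {P : Measure Ω} {ζ : ℕ → Ω → Z} (hind : iIndepFun ζ P)
    (hζ : ∀ k, Measurable (ζ k)) {k : ℕ} {U : Ω → β} (hU : Measurable[noiseHistory ζ k] U) :
    IndepFun U (ζ (k + 1)) P := by
  have hsplit := indep_iSup_of_disjoint (fun i => (hζ i).comap_le) hind.iIndep
    (S := Set.Iic k) (T := {k + 1}) (by simp)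
  rw [IndepFun_iff_Indep]
  refine indep_of_indep_of_le_left (indep_of_indep_of_le_right hsplit ?_) hU.comap_le
  exact le_iSup₂ (f := fun j (_ : j ∈ ({k + 1} : Set ℕ)) => mZ.comap (ζ j)) (k + 1) rfl

end NoiseHistory

section MomentumStep

variable {Ω α Z E : Type*} {mΩ : MeasurableSpace Ω} [MeasurableSpace α] [MeasurableSpace Z]
  [NormedAddCommGroup E] [InnerProductSpace ℝ E] [CompleteSpace E]
  [MeasurableSpace E] [BorelSpace E] [SecondCountableTopology E]
  {P : Measure Ω} [IsProbabilityMeasure P]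

theorem lintegral_ofReal_norm_smul_add_smul_sq_bounds_of_indepFun {C : Ω → E} {Y : Ω → α}
    {V : Ω → Z} (hind : IndepFun (fun ω => (C ω, Y ω)) V P)
    (hC : Measurable C) (hY : Measurable Y) (hV : Measurable V)
    {e : α → Z → E} (he : Measurable (Function.uncurry e))
    (he0 : ∀ y, ∫ ω, e y (V ω) ∂P = 0) {s : ℝ} (hs : ∀ y, ∫ ω, ‖e y (V ω)‖ ^ 2 ∂P ≤ s)
    {β : ℝ} (hβ : β ≠ 1) :
    ENNReal.ofReal (β ^ 2) * ∫⁻ ω, ENNReal.ofReal (‖C ω‖ ^ 2) ∂P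
        ≤ ∫⁻ ω, ENNReal.ofReal (‖β • C ω + (1 - β) • e (Y ω) (V ω)‖ ^ 2) ∂P ∧
      (∫⁻ ω, ENNReal.ofReal (‖β • C ω + (1 - β) • e (Y ω) (V ω)‖ ^ 2) ∂P ≠ ⊤ →
        ∫⁻ ω, ENNReal.ofReal (‖β • C ω + (1 - β) • e (Y ω) (V ω)‖ ^ 2) ∂P
          ≤ ENNReal.ofReal (β ^ 2) * ∫⁻ ω, ENNReal.ofReal (‖C ω‖ ^ 2) ∂P
            + ENNReal.ofReal ((1 - β) ^ 2 * s)) := by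
  set ν := P.map V
  set μ := P.map fun ω => (C ω, Y ω)
  have : IsProbabilityMeasure ν := Measure.isProbabilityMeasure_map hV.aemeasurable
  have : IsProbabilityMeasure μ := Measure.isProbabilityMeasure_map (hC.prodMk hY).aemeasurable
  have hF : Measurable (Function.uncurry fun (p : E × α) (v : Z) =>
      ENNReal.ofReal (‖β • p.1 + (1 - β) • e p.2 v‖ ^ 2)) := by
    have : Measurable fun q : (E × α) × Z => e q.1.2 q.2 :=
      he.comp (measurable_fst.snd.prodMk measurable_snd)
    unfold Function.uncurry
    fun_prop
  set Φ : E × α → ℝ≥0∞ := fun p => ∫⁻ v, ENNReal.ofReal (‖β • p.1 + (1 - β) • e p.2 v‖ ^ 2) ∂ν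
  have hiter : ∫⁻ ω, ENNReal.ofReal (‖β • C ω + (1 - β) • e (Y ω) (V ω)‖ ^ 2) ∂P
      = ∫⁻ p, Φ p ∂μ :=
    hind.lintegral_comp_eq_lintegral_lintegral (hC.prodMk hY) hV hF
  have hC2 : ∫⁻ ω, ENNReal.ofReal (‖C ω‖ ^ 2) ∂P = ∫⁻ p, ENNReal.ofReal (‖p.1‖ ^ 2) ∂μ :=
    (lintegral_map (f := fun p => ENNReal.ofReal (‖p.1‖ ^ 2)) (by fun_prop) (hC.prodMk hY)).symm
  have hbounds (p : E × α) := by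
    have hey : Measurable (e p.2) := he.of_uncurry_left
    exact lintegral_ofReal_norm_smul_add_smul_sq_bounds (s := s) hey.aestronglyMeasurable
      (by rw [integral_map hV.aemeasurable hey.aestronglyMeasurable, he0])
      (by rw [integral_map hV.aemeasurable (hey.norm.pow_const 2).aestronglyMeasurable]; exact hs _)
      hβ p.1
  refine ⟨?_, fun hfin => ?_⟩
  · rw [hC2, hiter, ← lintegral_const_mul _ (by fun_prop)]
    exact lintegral_mono fun p => (hbounds p).1
  · rw [hiter] at hfin ⊢
    have hfin_ae : ∀ᵐ p ∂μ, Φ p < ⊤ := ae_lt_top hF.lintegral_prod_right' hfin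
    calc ∫⁻ p, Φ p ∂μ
        ≤ ∫⁻ p, (ENNReal.ofReal (β ^ 2) * ENNReal.ofReal (‖p.1‖ ^ 2)
            + ENNReal.ofReal ((1 - β) ^ 2 * s)) ∂μ :=
          lintegral_mono_ae (hfin_ae.mono fun p hp => (hbounds p).2 hp.ne)
      _ = _ := by
          rw [lintegral_add_right _ measurable_const, lintegral_const, measure_univ, mul_one,
            lintegral_const_mul _ (by fun_prop), hC2]

theorem integral_norm_smul_add_smul_sq_le {C : Ω → E} {Y : Ω → α} {V : Ω → Z}
    (hind : IndepFun (fun ω => (C ω, Y ω)) V P)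
    (hC : Measurable C) (hY : Measurable Y) (hV : Measurable V)
    {e : α → Z → E} (he : Measurable (Function.uncurry e))
    (he0 : ∀ y, ∫ ω, e y (V ω) ∂P = 0) {s : ℝ} (hs : ∀ y, ∫ ω, ‖e y (V ω)‖ ^ 2 ∂P ≤ s)
    {β b : ℝ} (hβ0 : 0 < β) (hβ1 : β < 1) (hCb : ∫ ω, ‖C ω‖ ^ 2 ∂P ≤ b)
    (hb : β ^ 2 * b + (1 - β) ^ 2 * s ≤ b) :
    ∫ ω, ‖β • C ω + (1 - β) • e (Y ω) (V ω)‖ ^ 2 ∂P ≤ b := by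
  obtain ⟨hlow, hup⟩ :=
    lintegral_ofReal_norm_smul_add_smul_sq_bounds_of_indepFun hind hC hY hV he he0 hs hβ1.ne
  have hb0 : 0 ≤ b := (integral_nonneg fun _ => sq_nonneg _).trans hCb
  have hs0 : 0 ≤ s := by
    obtain ⟨ω⟩ := nonempty_of_isProbabilityMeasure P
    exact (integral_nonneg fun _ => sq_nonneg _).trans (hs (Y ω))
  have hmeas : Measurable fun ω => β • C ω + (1 - β) • e (Y ω) (V ω) :=
    (hC.const_smul β).add ((he.comp (hY.prodMk hV)).const_smul (1 - β))
  rw [integral_norm_sq_eq_toReal_lintegral hC.aestronglyMeasurable] at hCb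
  rw [integral_norm_sq_eq_toReal_lintegral hmeas.aestronglyMeasurable]
  set X := ∫⁻ ω, ENNReal.ofReal (‖C ω‖ ^ 2) ∂P
  set X' := ∫⁻ ω, ENNReal.ofReal (‖β • C ω + (1 - β) • e (Y ω) (V ω)‖ ^ 2) ∂P
  -- an infinite second moment has Bochner integral `0`
  by_cases hX' : X' = ⊤
  · rw [hX', ENNReal.toReal_top]
    exact hb0
  have hX : X ≠ ⊤ := by
    rintro hX
    rw [hX, ENNReal.mul_top (by positivity), top_le_iff] at hlow
    exact hX' hlow
  calc X'.toReal
      ≤ (ENNReal.ofReal (β ^ 2) * X + ENNReal.ofReal ((1 - β) ^ 2 * s)).toReal :=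
        ENNReal.toReal_mono (by finiteness) (hup hX')
    _ = β ^ 2 * X.toReal + (1 - β) ^ 2 * s := by
        rw [ENNReal.toReal_add (by finiteness) ENNReal.ofReal_ne_top, ENNReal.toReal_mul,
          ENNReal.toReal_ofReal (by positivity), ENNReal.toReal_ofReal (by positivity)]
    _ ≤ b := by nlinarith

theorem integral_norm_sq_le_of_momentum_recursion {ζ : ℕ → Ω → Z}
    (hζ : ∀ k, Measurable (ζ k)) (hind : iIndepFun ζ P)
    {e : α → Z → E} (he : Measurable (Function.uncurry e))
    (he0 : ∀ y k, ∫ ω, e y (ζ k ω) ∂P = 0) {s : ℝ}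
    (hs : ∀ y k, ∫ ω, ‖e y (ζ k ω)‖ ^ 2 ∂P ≤ s) {β : ℕ → ℝ} {b : ℝ} {N : ℕ}
    (hβ : ∀ k < N, 0 < β (k + 1) ∧ β (k + 1) < 1 ∧ β (k + 1) ^ 2 * b + (1 - β (k + 1)) ^ 2 * s ≤ b)
    (hb : 0 ≤ b) {D : ℕ → Ω → E} {Y : ℕ → Ω → α} (hD0 : ∀ ω, D 0 ω = 0)
    (hY : ∀ k, Measurable[noiseHistory ζ k] (Y (k + 1)))
    (hD : ∀ k ω,
      D (k + 1) ω = β (k + 1) • D k ω + (1 - β (k + 1)) • e (Y (k + 1) ω) (ζ (k + 1) ω)) :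
    ∀ k ≤ N, ∫ ω, ‖D k ω‖ ^ 2 ∂P ≤ b := by
  have hDm : ∀ k, Measurable[noiseHistory ζ k] (D k) := by
    intro k
    induction k with
    | zero => simpa only [funext hD0] using measurable_const
    | succ k ih =>
      rw [funext (hD k)]
      have hmono := noiseHistory_mono ζ k.le_succ
      exact ((ih.mono hmono le_rfl).const_smul _).add ((he.comp (((hY k).mono hmono le_rfl).prodMk
        (measurable_noiseHistory le_rfl))).const_smul _)
  intro k
  induction k with
  | zero => simpa [hD0] using hb
  | succ k ih =>
    intro hk
    obtain ⟨hβ0, hβ1, hcontr⟩ := hβ k hk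
    simp only [hD k]
    exact integral_norm_smul_add_smul_sq_le
      (hind.indepFun_succ_of_measurable_noiseHistory hζ ((hDm k).prodMk (hY k)))
      ((hDm k).mono (noiseHistory_le hζ k) le_rfl) ((hY k).mono (noiseHistory_le hζ k) le_rfl)
      (hζ _) he (fun y => he0 y _) (fun y => hs y _) hβ0 hβ1 (ih (by omega)) hcontr

end MomentumStep

theorem exists_stage (T : ℕ → ℕ) {n k : ℕ} (hk : 1 ≤ k) (hkn : k ≤ ∑ j ∈ Icc 1 n, T j) :
    ∃ l ∈ Icc 1 n, ∑ j ∈ Icc 1 (l - 1), T j < k ∧ k ≤ ∑ j ∈ Icc 1 l, T j := by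
  induction n with
  | zero => simp at hkn; omega
  | succ n ih =>
    by_cases hkn' : k ≤ ∑ j ∈ Icc 1 n, T j
    · obtain ⟨l, hl, hlk⟩ := ih hkn'
      exact ⟨l, Icc_subset_Icc_right n.le_succ hl, hlk⟩
    · exact ⟨n + 1, mem_Icc.2 ⟨by omega, le_rfl⟩, by simpa using hkn', hkn⟩

theorem mem_Ico_of_stage {n : ℕ} {T : ℕ → ℕ} {βs B : ℕ → ℝ}
    (hβs : ∀ l ∈ Icc 1 n, βs l ∈ Set.Ico (0 : ℝ) 1)
    (hstage : ∀ l ∈ Icc 1 n, ∀ k : ℕ,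
      ∑ j ∈ Icc 1 (l - 1), T j < k → k ≤ ∑ j ∈ Icc 1 l, T j → B k = βs l)
    (hmono : ∀ i j : ℕ, 1 ≤ i → i ≤ j → j ≤ n → βs i ≤ βs j)
    {k : ℕ} (hk : 1 ≤ k) (hkn : k ≤ ∑ j ∈ Icc 1 n, T j) :
    B k ∈ Set.Ico (βs 1) 1 := by
  obtain ⟨l, hl, hlk, hkl⟩ := exists_stage T hk hkn
  rw [hstage l hl k hlk hkl]
  exact ⟨hmono 1 l le_rfl (mem_Icc.1 hl).1 (mem_Icc.1 hl).2, (hβs l hl).2⟩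

/-- The paper's `b_{k,i}`. -/
def momentumWeight {R : Type*} [CommRing R] (B : ℕ → R) (k i : ℕ) : R :=
  (1 - B i) * ∏ j ∈ Icc (i + 1) k, B j

theorem sub_sum_momentumWeight_smul_succ {R M : Type*} [CommRing R] [AddCommGroup M]
    [Module R M] {B : ℕ → R} {m g' g : ℕ → M} {k : ℕ}
    (hm : m (k + 1) = B (k + 1) • m k + (1 - B (k + 1)) • g' (k + 1)) :
    m (k + 1) - ∑ i ∈ Icc 1 (k + 1), momentumWeight B (k + 1) i • g i
      = B (k + 1) • (m k - ∑ i ∈ Icc 1 k, momentumWeight B k i • g i)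
        + (1 - B (k + 1)) • (g' (k + 1) - g (k + 1)) := by
  have hsum : ∑ i ∈ Icc 1 (k + 1), momentumWeight B (k + 1) i • g i
      = B (k + 1) • ∑ i ∈ Icc 1 k, momentumWeight B k i • g i + (1 - B (k + 1)) • g (k + 1) := by
    rw [sum_Icc_succ_top (by omega), smul_sum]
    congr 1
    · refine sum_congr rfl fun i hi => ?_
      rw [smul_smul, momentumWeight, momentumWeight, prod_Icc_succ_top (by grind)]
      ring_nf
    · simp [momentumWeight]
  rw [hm, hsum, smul_sub, smul_sub]
  abel

theorem measurable_noiseHistory_sgdm {Ω Z E : Type*} [MeasurableSpace Z]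
    [NormedAddCommGroup E] [NormedSpace ℝ E] [MeasurableSpace E] [BorelSpace E]
    [SecondCountableTopology E] {ζ : ℕ → Ω → Z} {G : E → Z → E}
    (hG : Measurable (Function.uncurry G)) {A B : ℕ → ℝ} {x m : ℕ → Ω → E} {x1 : E}
    (hx1 : ∀ ω, x 1 ω = x1) (hm0 : ∀ ω, m 0 ω = 0)
    (hm : ∀ k, 1 ≤ k → ∀ ω, m k ω = B k • m (k - 1) ω + (1 - B k) • G (x k ω) (ζ k ω))
    (hx : ∀ k, 1 ≤ k → ∀ ω, x (k + 1) ω = x k ω - A k • m k ω) (k : ℕ) :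
    Measurable[noiseHistory ζ k] (m k) ∧ Measurable[noiseHistory ζ k] (x (k + 1)) := by
  induction k with
  | zero =>
    rw [funext hm0, funext hx1]
    exact ⟨measurable_const, measurable_const⟩
  | succ k ih =>
    have hmono := noiseHistory_mono ζ k.le_succ
    have hmk : Measurable[noiseHistory ζ (k + 1)] (m (k + 1)) := by
      rw [funext (hm (k + 1) k.succ_pos)]
      exact ((ih.1.mono hmono le_rfl).const_smul _).add ((hG.comp ((ih.2.mono hmono le_rfl).prodMk
        (measurable_noiseHistory le_rfl))).const_smul _)
    refine ⟨hmk, ?_⟩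
    rw [funext (hx (k + 1) k.succ_pos)]
    exact (ih.2.mono hmono le_rfl).sub (hmk.const_smul _)

theorem sq_mul_add_one_sub_sq_mul_le {β₀ β s : ℝ} (hβ₀ : 0 ≤ β₀) (hβ₀β : β₀ ≤ β) (hβ : β < 1)
    (hs : 0 ≤ s) : β ^ 2 * (s * (1 - β₀)) + (1 - β) ^ 2 * s ≤ s * (1 - β₀) := by
  have h1 : 1 - β ≤ (1 - β₀) * (1 + β) := by nlinarith
  have h2 : (1 - β) ^ 2 ≤ (1 - β₀) * (1 - β ^ 2) := by
    nlinarith [mul_le_mul_of_nonneg_left h1 (sub_nonneg.2 hβ.le)]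
  nlinarith [mul_le_mul_of_nonneg_left h2 hs]

theorem multistage_sgdm_momentum_variance_general
    {d : ℕ}
    {Ω : Type*} [MeasureSpace Ω] (hprob : IsProbabilityMeasure (ℙ : Measure Ω))
    {Z : Type*} [mZ : MeasurableSpace Z]
    (gradf : EuclideanSpace ℝ (Fin d) → EuclideanSpace ℝ (Fin d))
    (L : ℝ) (hL : 0 < L)
    (hsmooth : ∀ x y, ‖gradf x - gradf y‖ ≤ L * ‖x - y‖)
    (σ : ℝ)
    (ζ : ℕ → Ω → Z) (hζmeas : ∀ k, Measurable (ζ k))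
    (hindep : iIndepFun ζ ℙ)
    (G : EuclideanSpace ℝ (Fin d) → Z → EuclideanSpace ℝ (Fin d))
    (hGmeas : Measurable (Function.uncurry G))
    (hunbiased : ∀ x k, ∫ ω, G x (ζ k ω) ∂ℙ = gradf x)
    (hvar : ∀ x k, ∫ ω, ‖G x (ζ k ω) - gradf x‖ ^ 2 ∂ℙ ≤ σ ^ 2)
    (n : ℕ) (hn : 1 ≤ n)
    (αs βs : ℕ → ℝ) (T : ℕ → ℕ)
    (hβs : ∀ l ∈ Finset.Icc 1 n, βs l ∈ Set.Ico (0 : ℝ) 1)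
    (A B : ℕ → ℝ)
    (hstage : ∀ l ∈ Finset.Icc 1 n, ∀ k : ℕ,
      (∑ j ∈ Finset.Icc 1 (l - 1), T j) < k → k ≤ (∑ j ∈ Finset.Icc 1 l, T j) →
      A k = αs l ∧ B k = βs l)
    (x m : ℕ → Ω → EuclideanSpace ℝ (Fin d))
    (x1 : EuclideanSpace ℝ (Fin d)) (hx1 : ∀ ω, x 1 ω = x1)
    (hm0 : ∀ ω, m 0 ω = 0)
    (hm : ∀ k, 1 ≤ k → ∀ ω, m k ω = B k • m (k - 1) ω + (1 - B k) • G (x k ω) (ζ k ω))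
    (hx : ∀ k, 1 ≤ k → ∀ ω, x (k + 1) ω = x k ω - A k • m k ω)
    (hmono : ∀ i j : ℕ, 1 ≤ i → i ≤ j → j ≤ n → βs i ≤ βs j)
    (hβhalf : (1 : ℝ) / 2 ≤ βs 1) :
    ∀ k : ℕ, 1 ≤ k → k ≤ ∑ j ∈ Finset.Icc 1 n, T j →
      (1 / (1 - βs 1)) *
          ∫ ω, ‖m k ω - ∑ i ∈ Finset.Icc 1 k,
            ((1 - B i) * ∏ j ∈ Finset.Icc (i + 1) k, B j) • gradf (x i ω)‖ ^ 2 ∂ℙ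
        ≤ 2 * σ ^ 2 := by
  intro k hk1 hk2
  have hβ1 : βs 1 < 1 := (hβs 1 (mem_Icc.2 ⟨le_rfl, hn⟩)).2
  have hgradf : Measurable gradf :=
    (lipschitzWith_iff_norm_sub_le (C := ⟨L, hL.le⟩).2 hsmooth).continuous.measurable
  have hD : ∫ ω, ‖m k ω - ∑ i ∈ Icc 1 k, momentumWeight B k i • gradf (x i ω)‖ ^ 2 ∂ℙ
      ≤ σ ^ 2 * (1 - βs 1) := by
    refine integral_norm_sq_le_of_momentum_recursion hζmeas hindep (β := B) (Y := x)
      (D := fun k ω => m k ω - ∑ i ∈ Icc 1 k, momentumWeight B k i • gradf (x i ω))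
      (e := fun y v => G y v - gradf y) (hGmeas.sub (hgradf.comp measurable_fst))
      (fun y k => integral_sub_eq_zero_of_integral_eq (hunbiased y k)) hvar
      (fun k hk => ?_) (mul_nonneg (sq_nonneg σ) (by linarith)) (by simp [hm0])
      (fun k => (measurable_noiseHistory_sgdm hGmeas hx1 hm0 hm hx k).2)
      (fun k ω => sub_sum_momentumWeight_smul_succ (m := fun k => m k ω)
        (g' := fun i => G (x i ω) (ζ i ω)) (by simpa using hm (k + 1) k.succ_pos ω)) k hk2
    obtain ⟨hβB, hB1⟩ := mem_Ico_of_stage hβs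
      (fun l hl k h1 h2 => (hstage l hl k h1 h2).2) hmono k.succ_pos hk
    exact ⟨by linarith, hB1, sq_mul_add_one_sub_sq_mul_le (by linarith) hβB hB1 (sq_nonneg σ)⟩
  calc _ ≤ 1 / (1 - βs 1) * (σ ^ 2 * (1 - βs 1)) := by gcongr; exact hD
    _ = σ ^ 2 := by field_simp [(sub_pos.2 hβ1).ne']
    _ ≤ 2 * σ ^ 2 := by nlinarith [sq_nonneg σ]

/-- Variance bound for the multistage SGDM momentum vector. -/
theorem multistage_sgdm_momentum_variance
    {d : ℕ} (hd : 1 ≤ d)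
    {Ω : Type*} [MeasureSpace Ω] (hprob : IsProbabilityMeasure (ℙ : Measure Ω))
    {Z : Type*} [mZ : MeasurableSpace Z]
    (f : EuclideanSpace ℝ (Fin d) → ℝ)
    (gradf : EuclideanSpace ℝ (Fin d) → EuclideanSpace ℝ (Fin d))
    (hgrad : ∀ x, HasGradientAt f (gradf x) x)
    (L : ℝ) (hL : 0 < L)
    (hsmooth : ∀ x y, ‖gradf x - gradf y‖ ≤ L * ‖x - y‖)
    (fstar : ℝ) (hfstar : IsGLB (Set.range f) fstar)
    (σ : ℝ) (hσ : 0 ≤ σ)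
    (ζ : ℕ → Ω → Z) (hζmeas : ∀ k, Measurable (ζ k))
    (hindep : iIndepFun ζ ℙ)
    (G : EuclideanSpace ℝ (Fin d) → Z → EuclideanSpace ℝ (Fin d))
    (hGmeas : Measurable (Function.uncurry G))
    (hunbiased : ∀ x k, ∫ ω, G x (ζ k ω) ∂ℙ = gradf x)
    (hvar : ∀ x k, ∫ ω, ‖G x (ζ k ω) - gradf x‖ ^ 2 ∂ℙ ≤ σ ^ 2)
    (n : ℕ) (hn : 1 ≤ n)
    (αs βs : ℕ → ℝ) (T : ℕ → ℕ)
    (hαs : ∀ l ∈ Finset.Icc 1 n, 0 < αs l)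
    (hβs : ∀ l ∈ Finset.Icc 1 n, βs l ∈ Set.Ico (0 : ℝ) 1)
    (A B : ℕ → ℝ)
    (hstage : ∀ l ∈ Finset.Icc 1 n, ∀ k : ℕ,
      (∑ j ∈ Finset.Icc 1 (l - 1), T j) < k → k ≤ (∑ j ∈ Finset.Icc 1 l, T j) →
      A k = αs l ∧ B k = βs l)
    (x m : ℕ → Ω → EuclideanSpace ℝ (Fin d))
    (x1 : EuclideanSpace ℝ (Fin d)) (hx1 : ∀ ω, x 1 ω = x1)
    (hm0 : ∀ ω, m 0 ω = 0)
    (hm : ∀ k, 1 ≤ k → ∀ ω, m k ω = B k • m (k - 1) ω + (1 - B k) • G (x k ω) (ζ k ω))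
    (hx : ∀ k, 1 ≤ k → ∀ ω, x (k + 1) ω = x k ω - A k • m k ω)
    (hmono : ∀ i j : ℕ, 1 ≤ i → i ≤ j → j ≤ n → βs i ≤ βs j)
    (hβhalf : (1 : ℝ) / 2 ≤ βs 1)
    (hThalf : ∀ i ∈ Finset.Icc 1 n, βs i ^ (2 * T i) ≤ (1 : ℝ) / 2) :
    ∀ k : ℕ, 1 ≤ k → k ≤ ∑ j ∈ Finset.Icc 1 n, T j →
      (1 / (1 - βs 1)) *
          ∫ ω, ‖m k ω - ∑ i ∈ Finset.Icc 1 k,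
            ((1 - B i) * ∏ j ∈ Finset.Icc (i + 1) k, B j) • gradf (x i ω)‖ ^ 2 ∂ℙ
        ≤ 2 * σ ^ 2 :=
  multistage_sgdm_momentum_variance_general hprob (mZ := mZ) gradf L hL hsmooth σ ζ hζmeas hindep G
    hGmeas hunbiased hvar n hn αs βs T hβs A B hstage x m x1 hx1 hm0 hm hx hmono hβhalf
end

section
/- Suppose 0 ≤ β_1 ≤ β_2 ≤ … ≤ β_n < 1. For 1 ≤ i ≤ k − 1 with k ≤ T_1 + … + T_n, define d_{k,i} = (L²/(1 − ∏_{j=1}^k β(j))) ∑_{j=1}^i (k − j) b_{k,j} and a_{k,i} = (L² β(k)^{k−i}/(1 − ∏_{j=1}^k β(j))) (k − i + β(k)/(1−β(k))). Then d_{k,i} ≤ a_{k,i} for all 1 ≤ i ≤ k − 1; equivalently, ∑_{j=1}^i (k − j) b_{k,j} ≤ β(k)^{k−i} (k − i + β(k)/(1−β(k))). -/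
/-! With `P a = ∏_{l=a}^k β(l)` the weights are differences, `b_{k,j} = P (j+1) - P j`, so summation
by parts turns `∑_{j≤i} (k-j) b_{k,j}` into `(k-i) P (i+1) - k P 1 + ∑_{j≤i} P j`. Since the schedule
is nondecreasing, `β(l) ≤ β(k)` for `l ≤ k`, hence `P a ≤ β(k)^(k+1-a)`: the first term is at most
`(k-i) β(k)^(k-i)` and the last sum is a geometric tail, at most `β(k)^(k-i) β(k)/(1-β(k))`. -/

open Finset

theorem sum_Icc_sub_mul_sub_eq (c : ℝ) (f : ℕ → ℝ) (i : ℕ) :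
    ∑ j ∈ Icc 1 i, (c - j) * (f (j + 1) - f j)
      = (c - i) * f (i + 1) - c * f 1 + ∑ j ∈ Icc 1 i, f j := by
  induction i with
  | zero => simp
  | succ i ih =>
    rw [sum_Icc_succ_top (by omega), sum_Icc_succ_top (by omega), ih]
    push_cast
    ring

theorem sum_Icc_pow_sub_le {β : ℝ} (hβ0 : 0 ≤ β) (hβ1 : β < 1) {i k : ℕ} (hik : i ≤ k) :
    ∑ j ∈ Icc 1 i, β ^ (k + 1 - j) ≤ β ^ (k - i) * (β / (1 - β)) := by
  rw [← Ico_add_one_right_eq_Icc, sum_Ico_reflect (β ^ ·) 1 (by omega : i + 1 ≤ k + 1 + 1)]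
  calc _ ≤ β ^ (k + 1 + 1 - (i + 1)) / (1 - β) := geom_sum_Ico_le_of_lt_one hβ0 hβ1
    _ = β ^ (k - i) * (β / (1 - β)) := by
      rw [show k + 1 + 1 - (i + 1) = k - i + 1 by omega, pow_succ, mul_div_assoc]

theorem prod_Icc_le_pow {B : ℕ → ℝ} {β : ℝ} {a k : ℕ}
    (hB : ∀ j ∈ Icc a k, 0 ≤ B j ∧ B j ≤ β) :
    ∏ j ∈ Icc a k, B j ≤ β ^ (k + 1 - a) := by
  calc ∏ j ∈ Icc a k, B j ≤ ∏ _j ∈ Icc a k, β :=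
        prod_le_prod (fun j hj => (hB j hj).1) (fun j hj => (hB j hj).2)
    _ = β ^ (k + 1 - a) := by rw [prod_const, Nat.card_Icc]

theorem one_sub_mul_prod_Icc_succ (B : ℕ → ℝ) {j k : ℕ} (hjk : j ≤ k) :
    (1 - B j) * ∏ l ∈ Icc (j + 1) k, B l = ∏ l ∈ Icc (j + 1) k, B l - ∏ l ∈ Icc j k, B l := by
  rw [← mul_prod_Ioc_eq_prod_Icc hjk, ← Icc_add_one_left_eq_Ioc]
  ring

theorem sum_Icc_mul_momentum_weight_le {B : ℕ → ℝ} {β : ℝ} {i k : ℕ}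
    (hB : ∀ j ∈ Icc 1 k, 0 ≤ B j ∧ B j ≤ β) (hβ0 : 0 ≤ β) (hβ1 : β < 1) (hik : i ≤ k) :
    ∑ j ∈ Icc 1 i, ((k - j : ℕ) : ℝ) * ((1 - B j) * ∏ l ∈ Icc (j + 1) k, B l)
      ≤ β ^ (k - i) * (((k - i : ℕ) : ℝ) + β / (1 - β)) := by
  have htail_le (a : ℕ) (ha : 1 ≤ a) : ∏ l ∈ Icc a k, B l ≤ β ^ (k + 1 - a) :=
    prod_Icc_le_pow fun j hj => hB j (Icc_subset_Icc_left ha hj)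
  have hfirst_nonneg : 0 ≤ ∏ l ∈ Icc 1 k, B l := prod_nonneg fun j hj => (hB j hj).1
  have hweights : ∑ j ∈ Icc 1 i, ((k - j : ℕ) : ℝ) * ((1 - B j) * ∏ l ∈ Icc (j + 1) k, B l)
      = ∑ j ∈ Icc 1 i, ((k : ℝ) - j) * (∏ l ∈ Icc (j + 1) k, B l - ∏ l ∈ Icc j k, B l) :=
    sum_congr rfl fun j hj => by
      have hjk : j ≤ k := (mem_Icc.1 hj).2.trans hik
      rw [Nat.cast_sub hjk, one_sub_mul_prod_Icc_succ B hjk]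
  have hlast : ((k : ℝ) - i) * ∏ l ∈ Icc (i + 1) k, B l ≤ ((k : ℝ) - i) * β ^ (k - i) := by
    have := htail_le (i + 1) (by omega)
    rw [show k + 1 - (i + 1) = k - i by omega] at this
    exact mul_le_mul_of_nonneg_left this (by simpa using hik)
  have hsum_tails : ∑ j ∈ Icc 1 i, ∏ l ∈ Icc j k, B l ≤ ∑ j ∈ Icc 1 i, β ^ (k + 1 - j) :=
    sum_le_sum fun j hj => htail_le j (mem_Icc.1 hj).1
  have hgeom := sum_Icc_pow_sub_le hβ0 hβ1 hik
  rw [hweights, sum_Icc_sub_mul_sub_eq k (fun a => ∏ l ∈ Icc a k, B l), Nat.cast_sub hik]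
  linarith [mul_nonneg (Nat.cast_nonneg k : (0 : ℝ) ≤ k) hfirst_nonneg]

theorem exists_stage_of_le_sum (T : ℕ → ℕ) {n j : ℕ} (hj : 1 ≤ j)
    (hjn : j ≤ ∑ t ∈ Icc 1 n, T t) :
    ∃ l ∈ Icc 1 n, ∑ t ∈ Icc 1 (l - 1), T t < j ∧ j ≤ ∑ t ∈ Icc 1 l, T t := by
  have hex : ∃ l, j ≤ ∑ t ∈ Icc 1 l, T t := ⟨n, hjn⟩
  have hpos : Nat.find hex ≠ 0 := by
    intro h
    have := Nat.find_spec hex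
    simp only [h, zero_lt_one, Icc_eq_empty_of_lt, sum_empty] at this
    omega
  refine ⟨Nat.find hex, mem_Icc.2 ⟨by omega, Nat.find_min' hex hjn⟩, ?_, Nat.find_spec hex⟩
  exact not_le.1 (Nat.find_min hex (by omega))

theorem stage_le_of_le (T : ℕ → ℕ) {j k l m : ℕ} (hj : ∑ t ∈ Icc 1 (l - 1), T t < j)
    (hjk : j ≤ k) (hk : k ≤ ∑ t ∈ Icc 1 m, T t) : l ≤ m := by
  by_contra! h
  have := sum_le_sum_of_subset (f := T) (Icc_subset_Icc_right (by omega : m ≤ l - 1) :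
    Icc 1 m ⊆ Icc 1 (l - 1))
  omega

theorem multistage_weight_bounds {n : ℕ} {βs : ℕ → ℝ} {T : ℕ → ℕ} {B : ℕ → ℝ}
    (hβs : ∀ l ∈ Icc 1 n, βs l ∈ Set.Ico (0 : ℝ) 1)
    (hmono : ∀ i j : ℕ, 1 ≤ i → i ≤ j → j ≤ n → βs i ≤ βs j)
    (hstage : ∀ l ∈ Icc 1 n, ∀ k : ℕ,
      ∑ j ∈ Icc 1 (l - 1), T j < k → k ≤ ∑ j ∈ Icc 1 l, T j → B k = βs l)
    {j k : ℕ} (hj : 1 ≤ j) (hjk : j ≤ k) (hk : k ≤ ∑ t ∈ Icc 1 n, T t) :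
    B j ∈ Set.Ico (0 : ℝ) 1 ∧ B j ≤ B k := by
  obtain ⟨l, hl, hjl, hjl'⟩ := exists_stage_of_le_sum T hj (hjk.trans hk)
  obtain ⟨m, hm, hkm, hkm'⟩ := exists_stage_of_le_sum T (hj.trans hjk) hk
  rw [hstage l hl j hjl hjl', hstage m hm k hkm hkm']
  exact ⟨hβs l hl, hmono l m (mem_Icc.1 hl).1 (stage_le_of_le T hjl hjk hkm') (mem_Icc.1 hm).2⟩

theorem multistage_weights_coefficient_bound_general
    (n : ℕ)
    (βs : ℕ → ℝ) (T : ℕ → ℕ)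
    (hβs : ∀ l ∈ Finset.Icc 1 n, βs l ∈ Set.Ico (0 : ℝ) 1)
    (hmono : ∀ i j : ℕ, 1 ≤ i → i ≤ j → j ≤ n → βs i ≤ βs j)
    (B : ℕ → ℝ)
    (hstage : ∀ l ∈ Finset.Icc 1 n, ∀ k : ℕ,
      (∑ j ∈ Finset.Icc 1 (l - 1), T j) < k → k ≤ (∑ j ∈ Finset.Icc 1 l, T j) →
      B k = βs l)
    (L : ℝ) :
    ∀ k : ℕ, 1 ≤ k → k ≤ ∑ j ∈ Finset.Icc 1 n, T j →
      ∀ i : ℕ, 1 ≤ i → i ≤ k - 1 →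
        (L ^ 2 / (1 - ∏ j ∈ Finset.Icc 1 k, B j)) *
            ∑ j ∈ Finset.Icc 1 i,
              ((k - j : ℕ) : ℝ) * ((1 - B j) * ∏ l ∈ Finset.Icc (j + 1) k, B l)
          ≤ (L ^ 2 * (B k) ^ (k - i) / (1 - ∏ j ∈ Finset.Icc 1 k, B j)) *
              (((k - i : ℕ) : ℝ) + B k / (1 - B k)) := by
  intro k hk hkT i _ hik
  have hbounds (j : ℕ) (hj : j ∈ Icc 1 k) :=
    multistage_weight_bounds hβs hmono hstage (mem_Icc.1 hj).1 (mem_Icc.1 hj).2 hkT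
  obtain ⟨⟨hβ0, hβ1⟩, -⟩ := hbounds k (mem_Icc.2 ⟨hk, le_rfl⟩)
  have hB (j : ℕ) (hj : j ∈ Icc 1 k) : 0 ≤ B j ∧ B j ≤ B k := ⟨(hbounds j hj).1.1, (hbounds j hj).2⟩
  have hden : 0 ≤ 1 - ∏ j ∈ Icc 1 k, B j := by
    have := (prod_Icc_le_pow hB).trans (pow_le_one₀ hβ0 hβ1.le)
    linarith
  calc _ ≤ (L ^ 2 / (1 - ∏ j ∈ Icc 1 k, B j)) *
          (B k ^ (k - i) * (((k - i : ℕ) : ℝ) + B k / (1 - B k))) :=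
        mul_le_mul_of_nonneg_left (sum_Icc_mul_momentum_weight_le hB hβ0 hβ1 (by omega))
          (div_nonneg (sq_nonneg L) hden)
    _ = _ := by ring

/-- For the multistage momentum weights, the coefficients
`d_{k,i} = (L²/(1−∏_{j=1}^k β(j))) ∑_{j=1}^i (k−j) b_{k,j}` are dominated by
`a_{k,i} = (L² β(k)^{k−i}/(1−∏_{j=1}^k β(j))) (k−i+β(k)/(1−β(k)))`. -/
theorem multistage_weights_coefficient_bound
    (n : ℕ) (hn : 1 ≤ n)
    (βs : ℕ → ℝ) (T : ℕ → ℕ)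
    (hβs : ∀ l ∈ Finset.Icc 1 n, βs l ∈ Set.Ico (0 : ℝ) 1)
    (hmono : ∀ i j : ℕ, 1 ≤ i → i ≤ j → j ≤ n → βs i ≤ βs j)
    (B : ℕ → ℝ)
    (hstage : ∀ l ∈ Finset.Icc 1 n, ∀ k : ℕ,
      (∑ j ∈ Finset.Icc 1 (l - 1), T j) < k → k ≤ (∑ j ∈ Finset.Icc 1 l, T j) →
      B k = βs l)
    (L : ℝ) (hL : 0 < L) :
    ∀ k : ℕ, 1 ≤ k → k ≤ ∑ j ∈ Finset.Icc 1 n, T j →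
      ∀ i : ℕ, 1 ≤ i → i ≤ k - 1 →
        (L ^ 2 / (1 - ∏ j ∈ Finset.Icc 1 k, B j)) *
            ∑ j ∈ Finset.Icc 1 i,
              ((k - j : ℕ) : ℝ) * ((1 - B j) * ∏ l ∈ Finset.Icc (j + 1) k, B l)
          ≤ (L ^ 2 * (B k) ^ (k - i) / (1 - ∏ j ∈ Finset.Icc 1 k, B j)) *
              (((k - i : ℕ) : ℝ) + B k / (1 - B k)) :=
  multistage_weights_coefficient_bound_general n βs T hβs hmono B hstage L
end
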